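/- arXiv:2505.07081 — 8 statements merged into one kernel-verified Lean document; each statement's English description precedes it below -/
import Mathlib

section
/- For a monotone submodular set function f : Finset E → ℝ on a finite type E and any two finsets S and O of E, one has f(O) ≤ f(S) + Σ_{e ∈ O \ S} (f(S ∪ {e}) − f(S)). -/
/-- For a monotone submodular set function `f : Finset E → ℝ` and any finsets `S`, `O`,
`f O ≤ f S + ∑ e ∈ O \ S, (f (S ∪ {e}) - f S)`. -/
theorem submodular_marginal_bound {E : Type*} [Fintype E] [DecidableEq E]
    (f : Finset E → ℝ)
    (hmono : ∀ A B : Finset E, A ⊆ B → f A ≤ f B)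
    (hsub : ∀ A B : Finset E, A ⊆ B → ∀ e : E,
      f (insert e B) - f B ≤ f (insert e A) - f A)
    (S O : Finset E) :
    f O ≤ f S + ∑ e ∈ O \ S, (f (insert e S) - f S) := by
  have key : ∀ D : Finset E, f (S ∪ D) ≤ f S + ∑ e ∈ D, (f (insert e S) - f S) := by
    intro D
    induction D using Finset.induction with
    | empty => simp
    | @insert a D ha ih =>
      rw [Finset.union_insert, Finset.sum_insert ha]
      have h1 : f (insert a (S ∪ D)) - f (S ∪ D) ≤ f (insert a S) - f S :=
        hsub S (S ∪ D) Finset.subset_union_left a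
      linarith
  calc f O ≤ f (S ∪ (O \ S)) := by
        apply hmono
        intro x hx
        by_cases h : x ∈ S
        · exact Finset.mem_union_left _ h
        · exact Finset.mem_union_right _ (Finset.mem_sdiff.mpr ⟨hx, h⟩)
    _ ≤ f S + ∑ e ∈ O \ S, (f (insert e S) - f S) := key _
end

section
/- Greedy step bound for submodular maximization: let f : Finset E → ℝ be a monotone submodular set function on a nonempty finite type E, let R ≥ 1 be a natural number, let S be a finset of E, and let O be a finset of E with |O| ≤ R and f(O) > f(S). Then there exists an element e of E such that f(S ∪ {e}) − f(S) ≥ (f(O) − f(S)) / R. -/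
theorem telescope_aux {E : Type*} [DecidableEq E]
    (f : Finset E → ℝ)
    (hsub : ∀ A B : Finset E, A ⊆ B → ∀ e : E,
      f (insert e B) - f B ≤ f (insert e A) - f A)
    (S : Finset E) (T : Finset E) :
    f (S ∪ T) - f S ≤ ∑ e ∈ T, (f (insert e S) - f S) := by
  induction T using Finset.induction_on with
  | empty => simp
  | @insert a T' ha ih =>
    rw [Finset.sum_insert ha]
    have h1 : S ∪ insert a T' = insert a (S ∪ T') := by
      ext x; simp [or_comm, or_assoc, or_left_comm]
    have h2 := hsub S (S ∪ T') Finset.subset_union_left a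
    rw [h1]
    linarith

/-- Greedy step bound for monotone submodular maximization: if `|O| ≤ R` and `f O > f S`,
then some element `e` has marginal gain at least `(f O - f S) / R`. -/
theorem greedy_step_bound {E : Type*} [Fintype E] [DecidableEq E] [Nonempty E]
    (f : Finset E → ℝ)
    (hmono : ∀ A B : Finset E, A ⊆ B → f A ≤ f B)
    (hsub : ∀ A B : Finset E, A ⊆ B → ∀ e : E,
      f (insert e B) - f B ≤ f (insert e A) - f A)
    (R : ℕ) (hR : 1 ≤ R) (S O : Finset E) (hO : O.card ≤ R) (hgt : f S < f O) :
    ∃ e : E, (f O - f S) / (R : ℝ) ≤ f (insert e S) - f S := by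
  set T := O \ S with hT
  have hunion : S ∪ T = S ∪ O := by
    ext x; simp [hT]
  have hfo : f O ≤ f (S ∪ T) := by
    rw [hunion]; exact hmono O (S ∪ O) Finset.subset_union_right
  have htel := telescope_aux f hsub S T
  have hne : T.Nonempty := by
    by_contra h
    rw [Finset.not_nonempty_iff_eq_empty] at h
    rw [h] at hfo
    simp at hfo
    linarith
  have hcard : T.card ≤ R := le_trans (Finset.card_le_card (Finset.sdiff_subset)) hO
  have hcardpos : (0:ℝ) < T.card := by exact_mod_cast Finset.card_pos.mpr hne
  have hRpos : (0:ℝ) < R := by exact_mod_cast hR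
  have hsum : ∑ e ∈ T, (f O - f S) / (R:ℝ) ≤ ∑ e ∈ T, (f (insert e S) - f S) := by
    have : ∑ e ∈ T, (f O - f S) / (R:ℝ) = T.card * ((f O - f S) / R) := by
      rw [Finset.sum_const, nsmul_eq_mul]
    rw [this]
    have h1 : (T.card : ℝ) * ((f O - f S) / R) ≤ f O - f S := by
      rw [mul_div_assoc', div_le_iff₀ hRpos]
      have : (T.card : ℝ) ≤ R := by exact_mod_cast hcard
      nlinarith
    linarith
  obtain ⟨e, _, he⟩ := Finset.exists_le_of_sum_le hne hsum
  exact ⟨e, he⟩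
end

section
/- Greedy residual decay: let f : Finset E → ℝ be a monotone submodular set function on a nonempty finite type E with f(∅) = 0, let R ≥ 1 be a natural number, and let (S_t) be a greedy sequence for f, i.e., S_0 = ∅ and S_{t+1} = S_t ∪ {e_t} where e_t maximizes f(S_t ∪ {e}) − f(S_t) over all e ∈ E. Then for every finset O of E with |O| ≤ R and every natural number t, f(O) − f(S_t) ≤ (1 − 1/R)^t · f(O). -/
lemma greedy_aux {E : Type*} [DecidableEq E]
    (f : Finset E → ℝ)
    (hsub : ∀ A B : Finset E, A ⊆ B → ∀ e : E,
      f (insert e B) - f B ≤ f (insert e A) - f A) :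
    ∀ (B A : Finset E), f (A ∪ B) ≤ f A + ∑ e ∈ B, (f (insert e A) - f A) := by
  intro B
  induction B using Finset.induction with
  | empty => intro A; simp
  | @insert e B he ih =>
    intro A
    have h1 : A ∪ insert e B = insert e (A ∪ B) := by
      ext x; simp [or_comm, or_assoc, or_left_comm]
    have h2 := hsub A (A ∪ B) Finset.subset_union_left e
    rw [h1, Finset.sum_insert he]
    have := ih A
    linarith

/-- Greedy residual decay: for a monotone submodular `f` with `f ∅ = 0` and a greedy
sequence `Sseq`, every `O` with `|O| ≤ R` satisfies
`f O - f (Sseq t) ≤ (1 - 1/R)^t * f O`. -/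
theorem greedy_residual_decay {E : Type*} [Fintype E] [DecidableEq E] [Nonempty E]
    (f : Finset E → ℝ)
    (hmono : ∀ A B : Finset E, A ⊆ B → f A ≤ f B)
    (hsub : ∀ A B : Finset E, A ⊆ B → ∀ e : E,
      f (insert e B) - f B ≤ f (insert e A) - f A)
    (hempty : f ∅ = 0)
    (R : ℕ) (hR : 1 ≤ R)
    (Sseq : ℕ → Finset E)
    (hS0 : Sseq 0 = ∅)
    (hgreedy : ∀ t : ℕ, ∃ e : E, Sseq (t + 1) = insert e (Sseq t) ∧
      ∀ e' : E, f (insert e' (Sseq t)) - f (Sseq t) ≤ f (insert e (Sseq t)) - f (Sseq t)) :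
    ∀ O : Finset E, O.card ≤ R → ∀ t : ℕ,
      f O - f (Sseq t) ≤ (1 - 1 / (R : ℝ)) ^ t * f O := by
  intro O hO t
  have hRpos : (0:ℝ) < R := by exact_mod_cast hR
  have hfac : (0:ℝ) ≤ 1 - 1 / R := by
    rw [sub_nonneg, div_le_one hRpos]; exact_mod_cast hR
  induction t with
  | zero => simp [hS0, hempty]
  | succ t ih =>
    obtain ⟨e, hSe, hmax⟩ := hgreedy t
    set S := Sseq t
    set g := f (insert e S) - f S with hg
    have hgnn : 0 ≤ g := by
      have := hmono S (insert e S) (Finset.subset_insert e S)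
      linarith
    -- f O - f S ≤ R * g
    have key : f O - f S ≤ (R : ℝ) * g := by
      have h1 : f O ≤ f (S ∪ O) := hmono O (S ∪ O) Finset.subset_union_right
      have h2 := greedy_aux f hsub O S
      have h3 : ∑ e' ∈ O, (f (insert e' S) - f S) ≤ ∑ _e' ∈ O, g :=
        Finset.sum_le_sum fun e' _ => hmax e'
      have h4 : ∑ _e' ∈ O, g = (O.card : ℝ) * g := by
        simp [Finset.sum_const, nsmul_eq_mul]
      have h5 : (O.card : ℝ) * g ≤ (R : ℝ) * g := by
        apply mul_le_mul_of_nonneg_right _ hgnn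
        exact_mod_cast hO
      linarith
    have hstep : f O - f (Sseq (t + 1)) ≤ (1 - 1 / R) * (f O - f S) := by
      rw [hSe]
      have : (1 - 1 / R) * (f O - f S) = (f O - f S) - (1 / R) * (f O - f S) := by ring
      rw [this]
      have : (1 / (R : ℝ)) * (f O - f S) ≤ g := by
        rw [div_mul_eq_mul_div, one_mul, div_le_iff₀ hRpos]
        linarith [key]
      linarith
    calc f O - f (Sseq (t + 1)) ≤ (1 - 1 / R) * (f O - f S) := hstep
      _ ≤ (1 - 1 / R) * ((1 - 1 / R) ^ t * f O) := mul_le_mul_of_nonneg_left ih hfac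
      _ = (1 - 1 / R) ^ (t + 1) * f O := by ring
end

section
/- The greedy algorithm yields a (1 − 1/e)-approximation for maximizing a monotone submodular function under a cardinality constraint: let f : Finset E → ℝ be a monotone submodular set function on a nonempty finite type E with f(∅) = 0 and f ≥ 0, let R ≥ 1 be a natural number, and let (S_t) be a greedy sequence for f. Then for every finset O of E with |O| ≤ R, f(S_R) ≥ (1 − (1 − 1/R)^R) · f(O) ≥ (1 − 1/e) · f(O). In particular, the greedy algorithm applied to the coverage function of the Finding Common Recourse problem returns a set of R recourse whose coverage is at least (1 − 1/e) times the maximum coverage achievable by any R recourse. -/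
/-- The greedy algorithm gives a `(1 - 1/e)`-approximation for maximizing a monotone
submodular nonnegative function with `f ∅ = 0` under the cardinality constraint `R`:
`f (Sseq R) ≥ (1 - (1 - 1/R)^R) * f O ≥ (1 - 1/e) * f O` for every `O` with `|O| ≤ R`. -/
theorem greedy_one_sub_inv_e_approx {E : Type*} [Fintype E] [DecidableEq E] [Nonempty E]
    (f : Finset E → ℝ)
    (hmono : ∀ A B : Finset E, A ⊆ B → f A ≤ f B)
    (hsub : ∀ A B : Finset E, A ⊆ B → ∀ e : E,
      f (insert e B) - f B ≤ f (insert e A) - f A)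
    (hempty : f ∅ = 0)
    (hnonneg : ∀ A : Finset E, 0 ≤ f A)
    (R : ℕ) (hR : 1 ≤ R)
    (Sseq : ℕ → Finset E)
    (hS0 : Sseq 0 = ∅)
    (hgreedy : ∀ t : ℕ, ∃ e : E, Sseq (t + 1) = insert e (Sseq t) ∧
      ∀ e' : E, f (insert e' (Sseq t)) - f (Sseq t) ≤ f (insert e (Sseq t)) - f (Sseq t)) :
    ∀ O : Finset E, O.card ≤ R →
      (1 - (1 - 1 / (R : ℝ)) ^ R) * f O ≤ f (Sseq R) ∧
      (1 - 1 / Real.exp 1) * f O ≤ (1 - (1 - 1 / (R : ℝ)) ^ R) * f O := by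
  intro O hO
  have hRpos : (0:ℝ) < R := by exact_mod_cast hR
  have hfac : (0:ℝ) ≤ 1 - 1 / (R:ℝ) := by
    rw [sub_nonneg, div_le_one hRpos]; exact_mod_cast hR
  -- submodular sum bound
  have hsum : ∀ (T : Finset E) (A : Finset E),
      f (A ∪ T) - f A ≤ ∑ e ∈ T, (f (insert e A) - f A) := by
    intro T
    induction T using Finset.induction_on with
    | empty => intro A; simp
    | @insert a s ha ih =>
      intro A
      rw [Finset.sum_insert ha, Finset.union_insert]
      have h1 := hsub A (A ∪ s) Finset.subset_union_left a
      have h2 := ih A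
      linarith
  -- per-step recursion
  have hstep : ∀ t : ℕ, f O - f (Sseq (t+1)) ≤ (1 - 1/(R:ℝ)) * (f O - f (Sseq t)) := by
    intro t
    obtain ⟨e, hins, hmax⟩ := hgreedy t
    set g : ℝ := f (Sseq (t+1)) - f (Sseq t) with hg
    have hgain : 0 ≤ g := by
      rw [hg, hins, sub_nonneg]
      exact hmono _ _ (Finset.subset_insert _ _)
    have h1 : f O ≤ f (Sseq t ∪ O) := hmono _ _ Finset.subset_union_right
    have h2 : f (Sseq t ∪ O) - f (Sseq t) ≤ ∑ e' ∈ O, (f (insert e' (Sseq t)) - f (Sseq t)) :=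
      hsum O (Sseq t)
    have h3 : ∑ e' ∈ O, (f (insert e' (Sseq t)) - f (Sseq t)) ≤ (O.card : ℝ) * g := by
      rw [hg, hins]
      calc ∑ e' ∈ O, (f (insert e' (Sseq t)) - f (Sseq t))
          ≤ ∑ _e' ∈ O, (f (insert e (Sseq t)) - f (Sseq t)) :=
            Finset.sum_le_sum fun e' _ => hmax e'
        _ = (O.card : ℝ) * (f (insert e (Sseq t)) - f (Sseq t)) := by
            rw [Finset.sum_const, nsmul_eq_mul]
    have h4 : (O.card : ℝ) * g ≤ (R : ℝ) * g := by
      apply mul_le_mul_of_nonneg_right _ hgain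
      exact_mod_cast hO
    have h5 : f O - f (Sseq t) ≤ (R:ℝ) * g := by linarith
    have h6 : (f O - f (Sseq t)) / (R:ℝ) ≤ g := by
      rw [div_le_iff₀ hRpos]; linarith [h5]
    have : f O - f (Sseq (t+1)) = (f O - f (Sseq t)) - g := by rw [hg]; ring
    rw [this]
    have hexp : (1 - 1/(R:ℝ)) * (f O - f (Sseq t))
        = (f O - f (Sseq t)) - (f O - f (Sseq t)) / (R:ℝ) := by
      field_simp
    rw [hexp]
    linarith [h6]
  -- iterate
  have hiter : ∀ t : ℕ, f O - f (Sseq t) ≤ (1 - 1/(R:ℝ))^t * f O := by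
    intro t
    induction t with
    | zero => simp [hS0, hempty]
    | succ t ih =>
      calc f O - f (Sseq (t+1)) ≤ (1 - 1/(R:ℝ)) * (f O - f (Sseq t)) := hstep t
        _ ≤ (1 - 1/(R:ℝ)) * ((1 - 1/(R:ℝ))^t * f O) := by
            exact mul_le_mul_of_nonneg_left ih hfac
        _ = (1 - 1/(R:ℝ))^(t+1) * f O := by ring
  constructor
  · have := hiter R
    linarith
  · have hfO : 0 ≤ f O := hnonneg O
    have hpow : (1 - 1/(R:ℝ))^R ≤ 1 / Real.exp 1 := by
      have h1 : 1 - 1/(R:ℝ) ≤ Real.exp (-(1/(R:ℝ))) := by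
        have := Real.add_one_le_exp (-(1/(R:ℝ)))
        linarith
      have h2 : (1 - 1/(R:ℝ))^R ≤ (Real.exp (-(1/(R:ℝ))))^R :=
        pow_le_pow_left₀ hfac h1 R
      have h3 : (Real.exp (-(1/(R:ℝ))))^R = Real.exp ((R:ℝ) * (-(1/(R:ℝ)))) := by
        rw [← Real.exp_nat_mul]
      have hRne : (R:ℝ) ≠ 0 := ne_of_gt hRpos
      have h4 : (R:ℝ) * (-(1/(R:ℝ))) = -1 := by field_simp
      rw [h3, h4, Real.exp_neg] at h2
      simpa [one_div] using h2
    apply mul_le_mul_of_nonneg_right _ hfO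
    linarith
end

section
/- The FC objective function g is not pseudo-modular (Theorem 2): there exists a monotone function g : Finset (Fin 4) → ℕ — namely g(S) = max over finsets T of Fin 3 with |T| ≤ 2 of |{i ∈ S : c(i) ∈ T}|, where c : Fin 4 → Fin 3 sends 0 ↦ 0, 1 ↦ 1, 2 ↦ 2, 3 ↦ 2 — and disjoint finsets A = {0, 1} and B = {2, 3} such that g(A ∪ {e}) − g(A) = 0 for every e ∈ B while g(A ∪ B) − g(A) = 1. Consequently, for every real γ with 0 < γ ≤ 1 the pseudo-modularity inequality Σ_{e ∈ B} (g(A ∪ {e}) − g(A)) ≥ γ · (g(A ∪ B) − g(A)) fails for this g, A, B. -/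
/-- The counterfactual-to-recourse assignment of the counterexample:
counterfactuals `0, 1, 2, 3` are reached by recourse `0, 1, 2, 2` respectively. -/
def cRec : Fin 4 → Fin 3 := ![0, 1, 2, 2]

/-- The FC objective of the counterexample with recourse budget `R = 2`:
`g S` is the best number of counterfactuals of `S` reachable using at most two recourse. -/
def gFC (S : Finset (Fin 4)) : ℕ :=
  ((Finset.univ : Finset (Fin 3)).powerset.filter (fun T => T.card ≤ 2)).sup
    fun T => (S.filter (fun i => cRec i ∈ T)).card


lemma gFC_mono : ∀ S₁ S₂ : Finset (Fin 4), S₁ ⊆ S₂ → gFC S₁ ≤ gFC S₂ := by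
  intro S₁ S₂ h
  apply Finset.sup_mono_fun
  intro T _
  exact Finset.card_le_card (Finset.filter_subset_filter _ h)

lemma gA : gFC {0, 1} = 2 := by decide
lemma gA2 : gFC (({0, 1} : Finset (Fin 4)) ∪ {2}) = 2 := by decide
lemma gA3 : gFC (({0, 1} : Finset (Fin 4)) ∪ {3}) = 2 := by decide
lemma gAB : gFC (({0, 1} : Finset (Fin 4)) ∪ {2, 3}) = 3 := by decide

/-- `g` is monotone but not pseudo-modular: with `A = {0,1}` and `B = {2,3}` disjoint,
every singleton marginal gain over `A` of an element of `B` is `0` while the joint gain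
of `B` over `A` is `1`; hence the pseudo-modularity inequality fails for every
`γ ∈ (0,1]`. -/
theorem gFC_not_pseudomodular :
    (∀ S₁ S₂ : Finset (Fin 4), S₁ ⊆ S₂ → gFC S₁ ≤ gFC S₂) ∧
    Disjoint ({0, 1} : Finset (Fin 4)) ({2, 3} : Finset (Fin 4)) ∧
    (∀ e ∈ ({2, 3} : Finset (Fin 4)),
      gFC (({0, 1} : Finset (Fin 4)) ∪ {e}) - gFC {0, 1} = 0) ∧
    gFC (({0, 1} : Finset (Fin 4)) ∪ {2, 3}) - gFC {0, 1} = 1 ∧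
    ∀ γ : ℝ, 0 < γ → γ ≤ 1 →
      ¬ ((∑ e ∈ ({2, 3} : Finset (Fin 4)),
            ((gFC (({0, 1} : Finset (Fin 4)) ∪ {e}) : ℝ) - (gFC {0, 1} : ℝ))) ≥
          γ * ((gFC (({0, 1} : Finset (Fin 4)) ∪ {2, 3}) : ℝ) - (gFC {0, 1} : ℝ))) := by
  refine ⟨gFC_mono, by decide, ?_, ?_, ?_⟩
  · intro e he
    fin_cases he
    · rw [gA2, gA]
    · rw [gA3, gA]
  · rw [gAB, gA]
  · intro γ hγ0 hγ1 h
    have hsum : (∑ e ∈ ({2, 3} : Finset (Fin 4)),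
        ((gFC (({0, 1} : Finset (Fin 4)) ∪ {e}) : ℝ) - (gFC {0, 1} : ℝ))) = 0 := by
      rw [show ({2,3} : Finset (Fin 4)) = {2} ∪ {3} by decide,
        Finset.sum_union (by decide), Finset.sum_singleton, Finset.sum_singleton,
        gA2, gA3, gA]
      norm_num
    rw [hsum, gAB, gA] at h
    norm_num at h
    linarith
end

section
/- Pseudo-modularity under constraint C1 (prerequisite of Theorem 3): let g : Finset E → ℕ be a monotone set function on a finite type E with decidable equality, and let R ≥ 1 be a natural number such that for every finset S of E and every element e ∉ S: 1 ≤ g(S ∪ {e}) − g(S) ≤ R. Then for all disjoint finsets A and B of E with B nonempty, Σ_{e ∈ B} (g(A ∪ {e}) − g(A)) ≥ (1 / (R · |B|)) · (g(A ∪ B) − g(A)), where the inequality is between real numbers. In particular g satisfies the pseudo-modularity inequality with ratio γ_{A,B} = 1/(R·|B|). -/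
/-- Pseudo-modularity under constraint C1: if `g : Finset E → ℕ` is monotone and every
singleton marginal gain lies in `[1, R]`, then for all disjoint `A`, `B` with `B`
nonempty, `∑ e ∈ B, (g (A ∪ {e}) - g A) ≥ (1 / (R * |B|)) * (g (A ∪ B) - g A)` in `ℝ`. -/
theorem pseudomodular_of_C1 {E : Type*} [Fintype E] [DecidableEq E]
    (g : Finset E → ℕ)
    (hmono : ∀ A B : Finset E, A ⊆ B → g A ≤ g B)
    (R : ℕ) (hR : 1 ≤ R)
    (hgain : ∀ S : Finset E, ∀ e : E, e ∉ S →
      g S + 1 ≤ g (insert e S) ∧ g (insert e S) ≤ g S + R)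
    (A B : Finset E) (hdisj : Disjoint A B) (hB : B.Nonempty) :
    (1 / ((R : ℝ) * (B.card : ℝ))) * ((g (A ∪ B) : ℝ) - (g A : ℝ)) ≤
      ∑ e ∈ B, ((g (A ∪ {e}) : ℝ) - (g A : ℝ)) := by
  -- upper bound: g (A ∪ B) ≤ g A + R * B.card
  have hub : ∀ C : Finset E, Disjoint A C → g (A ∪ C) ≤ g A + R * C.card := by
    intro C
    induction C using Finset.induction_on with
    | empty => intro _; simp
    | @insert e s hx ih =>
      intro hd
      have heA : e ∉ A := Finset.disjoint_right.mp hd (Finset.mem_insert_self e s)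
      have hds : Disjoint A s := hd.mono_right (Finset.subset_insert e s)
      have hnot : e ∉ A ∪ s := by
        simp [Finset.mem_union, heA, hx]
      have h1 : A ∪ insert e s = insert e (A ∪ s) := by
        ext x; simp [Finset.mem_insert, Finset.mem_union]
      rw [h1]
      have h2 := ih hds
      have := (hgain (A ∪ s) e hnot).2
      calc g (insert e (A ∪ s)) ≤ g (A ∪ s) + R := this
        _ ≤ g A + R * s.card + R := by omega
        _ = g A + R * (insert e s).card := by
            rw [Finset.card_insert_of_notMem hx]; ring
  have hpos : (0:ℝ) < (R : ℝ) * (B.card : ℝ) := by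
    have : 0 < B.card := Finset.card_pos.mpr hB
    positivity
  have hlhs : (1 / ((R : ℝ) * (B.card : ℝ))) * ((g (A ∪ B) : ℝ) - (g A : ℝ)) ≤ 1 := by
    rw [div_mul_eq_mul_div, one_mul, div_le_one hpos]
    have := hub B hdisj
    have : (g (A ∪ B) : ℝ) ≤ (g A : ℝ) + (R : ℝ) * (B.card : ℝ) := by
      exact_mod_cast this
    linarith
  have hsum : (B.card : ℝ) ≤ ∑ e ∈ B, ((g (A ∪ {e}) : ℝ) - (g A : ℝ)) := by
    calc (B.card : ℝ) = ∑ _e ∈ B, (1:ℝ) := by simp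
      _ ≤ ∑ e ∈ B, ((g (A ∪ {e}) : ℝ) - (g A : ℝ)) := by
        apply Finset.sum_le_sum
        intro e he
        have heA : e ∉ A := Finset.disjoint_right.mp hdisj he
        have := (hgain A e heA).1
        have h1 : A ∪ {e} = insert e A := by
          ext x; simp [Finset.mem_insert, Finset.mem_union]
        rw [h1]
        have : (g A : ℝ) + 1 ≤ (g (insert e A) : ℝ) := by exact_mod_cast this
        linarith
  have hB1 : (1:ℝ) ≤ (B.card : ℝ) := by
    exact_mod_cast Nat.one_le_iff_ne_zero.mpr (Finset.card_ne_zero_of_mem hB.choose_spec)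
  linarith
end

section
/- In the NP-hardness reduction (Theorem 1), the recourse r_i produces a counterfactual exactly when u ∈ S i: let U be a finite type, S : Fin m → Finset U, u ∈ U, and ℓ_u : Fin (m+1) → Option (Fin m) the star labeling defined by ℓ_u 0 = none and ℓ_u (i.succ) = some i iff u ∈ S i (none otherwise). For any color i : Fin m, let r_i(ℓ_u) := Function.update ℓ_u 0 (some i) be the labeling obtained by coloring the center vertex with color i. Then there exist distinct vertices v ≠ w and a color c with r_i(ℓ_u) v = some c and r_i(ℓ_u) w = some c if and only if u ∈ S i; i.e., X(r_i(G_u)) = 1 ⟺ u ∈ S i. -/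
/-- In the NP-hardness reduction, the recourse `r_i` (coloring the center with color `i`)
produces an accepted graph if and only if `u ∈ S i`. -/
theorem reduction_recourse_accepts_iff {U : Type*} [Fintype U] [DecidableEq U] {m : ℕ}
    (S : Fin m → Finset U) (u : U)
    (ℓ : Fin (m + 1) → Option (Fin m))
    (h0 : ℓ 0 = none)
    (hsucc : ∀ i : Fin m, ℓ i.succ = if u ∈ S i then some i else none)
    (i : Fin m) :
    (∃ (v w : Fin (m + 1)) (c : Fin m), v ≠ w ∧
        Function.update ℓ 0 (some i) v = some c ∧
        Function.update ℓ 0 (some i) w = some c) ↔ u ∈ S i := by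
  have key : ∀ v : Fin (m + 1), v ≠ 0 → ∀ c : Fin m,
      Function.update ℓ 0 (some i) v = some c → v = c.succ ∧ u ∈ S c := by
    intro v hv c hc
    rw [Function.update_of_ne hv] at hc
    obtain ⟨j, rfl⟩ := Fin.eq_succ_of_ne_zero hv
    rw [hsucc j] at hc
    by_cases hj : u ∈ S j
    · simp [hj] at hc; subst hc; exact ⟨rfl, hj⟩
    · simp [hj] at hc
  constructor
  · rintro ⟨v, w, c, hvw, hvc, hwc⟩
    by_cases hv : v = 0
    · subst hv
      rw [Function.update_self] at hvc
      obtain ⟨rfl, hS⟩ := key w (Ne.symm hvw) c hwc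
      rwa [Option.some_inj.mp hvc]
    · obtain ⟨rfl, hS⟩ := key v hv c hvc
      by_cases hw : w = 0
      · subst hw
        rw [Function.update_self] at hwc
        rwa [← Option.some_inj.mp hwc] at hS
      · obtain ⟨heq, _⟩ := key w hw c hwc
        exact absurd heq.symm hvw
  · intro hS
    refine ⟨0, i.succ, i, (Fin.succ_ne_zero i).symm, Function.update_self _ _ _, ?_⟩
    rw [Function.update_of_ne (Fin.succ_ne_zero i), hsucc i, if_pos hS]
end

section
/- Correctness of the NP-hardness reduction (Theorem 1): let U be a finite type, S : Fin m → Finset U a maximum-coverage instance, and for u ∈ U and i : Fin m define accepted(u, i) to hold iff the labeling Function.update ℓ_u 0 (some i) has two distinct vertices with the same color, where ℓ_u is the star labeling with ℓ_u 0 = none and ℓ_u (i.succ) = some i iff u ∈ S i. Then for every budget R, the optimal FCR coverage equals the optimal maximum-coverage value: max over finsets I of Fin m with |I| ≤ R of |{u ∈ U : ∃ i ∈ I, accepted(u, i)}| = max over finsets I of Fin m with |I| ≤ R of |{u ∈ U : ∃ i ∈ I, u ∈ S i}|. Hence an optimal solution of the constructed FCR instance yields an optimal solution of the maximum coverage instance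 (U, S). -/
/-- Correctness of the NP-hardness reduction: for every budget `R`, the optimal FCR
coverage of the constructed instance equals the optimal value of the maximum-coverage
instance `(U, S)`. -/
theorem reduction_correct {U : Type*} [Fintype U] [DecidableEq U] {m : ℕ}
    (S : Fin m → Finset U) (R : ℕ)
    (ℓ : U → Fin (m + 1) → Option (Fin m))
    (h0 : ∀ u : U, ℓ u 0 = none)
    (hsucc : ∀ (u : U) (i : Fin m), ℓ u i.succ = if u ∈ S i then some i else none) :
    (((Finset.univ : Finset (Fin m)).powerset.filter (fun I => I.card ≤ R)).sup
        fun I => (Finset.univ.filter fun u : U =>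
          ∃ i ∈ I, ∃ (v w : Fin (m + 1)) (c : Fin m), v ≠ w ∧
            Function.update (ℓ u) 0 (some i) v = some c ∧
            Function.update (ℓ u) 0 (some i) w = some c).card) =
      (((Finset.univ : Finset (Fin m)).powerset.filter (fun I => I.card ≤ R)).sup
        fun I => (Finset.univ.filter fun u : U => ∃ i ∈ I, u ∈ S i).card) := by
  have key : ∀ (u : U) (i : Fin m),
      (∃ (v w : Fin (m + 1)) (c : Fin m), v ≠ w ∧
        Function.update (ℓ u) 0 (some i) v = some c ∧
        Function.update (ℓ u) 0 (some i) w = some c) ↔ u ∈ S i := by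
    intro u i
    have hf0 : Function.update (ℓ u) 0 (some i) 0 = some i := by simp
    have hfs : ∀ j : Fin m, Function.update (ℓ u) 0 (some i) j.succ =
        if u ∈ S j then some j else none := by
      intro j
      rw [Function.update_of_ne (Fin.succ_ne_zero j), hsucc]
    constructor
    · rintro ⟨v, w, c, hvw, hv, hw⟩
      induction v using Fin.cases with
      | zero =>
        induction w using Fin.cases with
        | zero => exact absurd rfl hvw
        | succ k =>
          rw [hf0] at hv
          rw [hfs] at hw
          split_ifs at hw with hk
          · rw [Option.some_inj] at hv hw
            subst hv; subst hw; exact hk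
      | succ j =>
        rw [hfs] at hv
        split_ifs at hv with hj
        · rw [Option.some_inj] at hv
          subst hv
          induction w using Fin.cases with
          | zero =>
            rw [hf0, Option.some_inj] at hw
            subst hw; exact hj
          | succ k =>
            rw [hfs] at hw
            split_ifs at hw with hk
            · rw [Option.some_inj] at hw
              subst hw
              exact absurd rfl hvw
    · intro hu
      exact ⟨0, i.succ, i, (Fin.succ_ne_zero i).symm, hf0, by rw [hfs]; simp [hu]⟩
  congr 1
  ext I
  congr 1
  ext u
  simp only [key]
end
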